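/- arXiv:2512.11460 — 4 statements merged into one kernel-verified Lean document; each statement's English description precedes it below -/
import Mathlib

section
/- Let Σ ⊆ ℝ⁸ be the E₈ root system in its standard realization, with positive system Σ⁺ = {u_i ± u_j : i < j} ∪ {(1/2)(u₁ + ε₂u₂ + ⋯ + ε₈u₈) : ε_i = ±1, ∏ε_i = 1}. Let α = u₇ − u₈, β = u₆ − u₇, let Γ be the ℤ-span of {2γ : γ ∈ Σ}, and define Λ = {α + γ : γ ∈ Σ⁺, (α,γ) = 0} ∪ {β + δ : δ ∈ Σ⁺, (α,δ) = 0, (β,δ) = 0} ∪ {α + β + δ : δ ∈ Σ⁺, (α,δ) = 0, (β,δ) = 0}. Then for any two distinct elements μ, ν ∈ Λ, we have μ − ν ∉ Γ. -/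
/-- The standard orthonormal basis of `ℝ⁸`. -/
def u8 (i : Fin 8) : Fin 8 → ℝ := Pi.single i 1

open Finset in
/-- The `E₈` root system in its standard realization. -/
def e8roots : Set (Fin 8 → ℝ) :=
  {v | ∃ i j : Fin 8, i < j ∧ ∃ s t : ℝ, (s = 1 ∨ s = -1) ∧ (t = 1 ∨ t = -1) ∧
        v = s • u8 i + t • u8 j} ∪
  {v | ∃ ε : Fin 8 → ℝ, (∀ i, ε i = 1 ∨ ε i = -1) ∧ (∏ i, ε i) = 1 ∧
        v = (1 / 2 : ℝ) • ε}

open Finset in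
/-- The positive roots of `E₈`. -/
def e8pos : Set (Fin 8 → ℝ) :=
  {v | ∃ i j : Fin 8, i < j ∧ ∃ t : ℝ, (t = 1 ∨ t = -1) ∧
        v = u8 i + t • u8 j} ∪
  {v | ∃ ε : Fin 8 → ℝ, (∀ i, ε i = 1 ∨ ε i = -1) ∧ ε 0 = 1 ∧ (∏ i, ε i) = 1 ∧
        v = (1 / 2 : ℝ) • ε}

/-- The standard inner product on `ℝ⁸`. -/
def ip8 (x y : Fin 8 → ℝ) : ℝ := ∑ i, x i * y i

/-- The lattice `Γ` generated by the doubled roots `2γ`, `γ ∈ Σ(E₈)`. -/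
def e8Gamma : AddSubgroup (Fin 8 → ℝ) :=
  AddSubgroup.closure ((fun γ => (2 : ℝ) • γ) '' e8roots)

lemma u8_apply (i c : Fin 8) : u8 i c = if c = i then 1 else 0 := by
  simp [u8, Pi.single_apply]

example : ((u8 6 - u8 7 : Fin 8 → ℝ)) 6 = 1 := by
  simp [u8_apply, show (6:Fin 8) ≠ 7 by decide]

def IsGood (x : Fin 8 → ℝ) : Prop :=
  ∃ m : Fin 8 → ℤ, (∀ i, x i = (m i : ℝ)) ∧ (∀ i, (m i : ZMod 2) = (m 0 : ZMod 2)) ∧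
    ((∑ i, m i : ℤ) : ZMod 4) = 0

lemma IsGood.zero : IsGood 0 := ⟨0, by simp, by simp, by simp⟩

lemma IsGood.add {x y} (hx : IsGood x) (hy : IsGood y) : IsGood (x + y) := by
  obtain ⟨m, hm, hp, hs⟩ := hx
  obtain ⟨n, hn, hq, ht⟩ := hy
  refine ⟨m + n, fun i => by simp [hm i, hn i], fun i => by
    simp only [Pi.add_apply]; push_cast; rw [hp i, hq i], ?_⟩
  have h : (∑ i, (m + n) i) = (∑ i, m i) + (∑ i, n i) := by
    simp [Finset.sum_add_distrib]
  rw [h, Int.cast_add, hs, ht, add_zero]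

lemma IsGood.neg {x} (hx : IsGood x) : IsGood (-x) := by
  obtain ⟨m, hm, hp, hs⟩ := hx
  refine ⟨-m, fun i => by simp [hm i], fun i => by
    simp only [Pi.neg_apply]; push_cast; rw [hp i], ?_⟩
  have h : (∑ i, (-m) i) = -(∑ i, m i) := by simp
  rw [h, Int.cast_neg, hs, neg_zero]

lemma isGood_pair (i j : Fin 8) (a b : ℤ) (ha : a = 2 ∨ a = -2)
    (hb : b = 2 ∨ b = -2) (x : Fin 8 → ℝ)
    (hx : ∀ c, x c = (if c = i then (a:ℝ) else 0) + (if c = j then (b:ℝ) else 0)) :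
    IsGood x := by
  refine ⟨fun c => (if c = i then a else 0) + (if c = j then b else 0), fun c => by
    rw [hx c]; push_cast; split_ifs <;> norm_num, ?_, ?_⟩
  · have he : ∀ c : Fin 8,
        (((if c = i then a else 0) + (if c = j then b else 0) : ℤ) : ZMod 2) = 0 := by
      intro c
      rcases ha with rfl | rfl <;> rcases hb with rfl | rfl <;> split_ifs <;> decide
    intro c; rw [he c, he 0]
  · have h : (∑ c, ((if c = i then a else 0) + (if c = j then b else 0))) = a + b := by
      rw [Finset.sum_add_distrib, Finset.sum_ite_eq', Finset.sum_ite_eq']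
      simp
    rw [h]
    rcases ha with rfl | rfl <;> rcases hb with rfl | rfl <;> decide

lemma sum_mod4_aux (m : Fin 8 → ℤ) (s : Finset (Fin 8))
    (h : ∀ c ∈ s, m c = 1 ∨ m c = -1) :
    (((∑ c ∈ s, m c : ℤ) : ZMod 4) = s.card ∧ (∏ c ∈ s, m c) = 1) ∨
    (((∑ c ∈ s, m c : ℤ) : ZMod 4) = s.card + 2 ∧ (∏ c ∈ s, m c) = -1) := by
  induction s using Finset.induction_on with
  | empty => left; simp
  | @insert a s' ha ih =>
    have key : ((∑ c ∈ insert a s', m c : ℤ) : ZMod 4)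
        = (m a : ZMod 4) + ((∑ c ∈ s', m c : ℤ) : ZMod 4) := by
      rw [Finset.sum_insert ha]; push_cast; ring
    have kp : (∏ c ∈ insert a s', m c) = m a * ∏ c ∈ s', m c :=
      Finset.prod_insert ha
    have kc : ((insert a s').card : ZMod 4) = (s'.card : ZMod 4) + 1 := by
      rw [Finset.card_insert_of_notMem ha]; push_cast; ring
    rcases ih (fun c hc => h c (Finset.mem_insert_of_mem hc)) with ⟨h1, h2⟩ | ⟨h1, h2⟩ <;>
      rcases h a (Finset.mem_insert_self a s') with hm | hm
    · left; rw [key, kp, kc, h1, h2, hm]; norm_num; ring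
    · right; rw [key, kp, kc, h1, h2, hm]; norm_num
      rw [show (-1:ZMod 4) = 3 by decide]; ring
    · right; rw [key, kp, kc, h1, h2, hm]; norm_num; ring
    · left; rw [key, kp, kc, h1, h2, hm]; norm_num; ring

lemma sum_mod4 (m : Fin 8 → ℤ) (h : ∀ c, m c = 1 ∨ m c = -1) (hp : (∏ c, m c) = 1) :
    ((∑ c, m c : ℤ) : ZMod 4) = 0 := by
  rcases sum_mod4_aux m Finset.univ (fun c _ => h c) with ⟨h1, _⟩ | ⟨_, h2⟩
  · rw [h1]; simp [Finset.card_univ]; decide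
  · rw [hp] at h2; norm_num at h2

lemma isGood_gen (v : Fin 8 → ℝ) (hv : v ∈ e8roots) : IsGood ((2:ℝ) • v) := by
  rcases hv with ⟨i, j, hij, s, t, hs, ht, rfl⟩ | ⟨ε, hε, hεp, rfl⟩
  · have key : ∀ c, ((2:ℝ) • (s • u8 i + t • u8 j)) c
        = (if c = i then 2*s else 0) + (if c = j then 2*t else 0) := by
      intro c
      simp only [Pi.smul_apply, Pi.add_apply, smul_eq_mul, u8_apply]
      split_ifs <;> ring
    rcases hs with rfl | rfl <;> rcases ht with rfl | rfl
    · exact isGood_pair i j 2 2 (Or.inl rfl) (Or.inl rfl) _ (fun c => by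
        rw [key c]; push_cast; norm_num)
    · exact isGood_pair i j 2 (-2) (Or.inl rfl) (Or.inr rfl) _ (fun c => by
        rw [key c]; push_cast; norm_num)
    · exact isGood_pair i j (-2) 2 (Or.inr rfl) (Or.inl rfl) _ (fun c => by
        rw [key c]; push_cast; norm_num)
    · exact isGood_pair i j (-2) (-2) (Or.inr rfl) (Or.inr rfl) _ (fun c => by
        rw [key c]; push_cast; norm_num)
  · refine ⟨fun c => if ε c = 1 then 1 else -1, fun c => ?_, fun c => ?_, ?_⟩
    · simp only [Pi.smul_apply, smul_eq_mul]
      rcases hε c with h | h <;> rw [h] <;> norm_num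
    · dsimp only; split_ifs <;> decide
    · refine sum_mod4 _ (fun c => by split_ifs <;> simp) ?_
      have : ((∏ c, if ε c = 1 then (1:ℤ) else -1 : ℤ) : ℝ) = ∏ c, ε c := by
        push_cast
        refine Finset.prod_congr rfl fun c _ => ?_
        rcases hε c with h | h <;> rw [h] <;> norm_num
      rw [hεp] at this
      exact_mod_cast this

lemma good_of_mem {x : Fin 8 → ℝ} (hx : x ∈ e8Gamma) : IsGood x := by
  refine AddSubgroup.closure_induction (p := fun g _ => IsGood g)
    ?_ IsGood.zero (fun a b _ _ ha hb => ha.add hb) (fun a _ ha => ha.neg) hx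
  rintro x ⟨γ, hγ, rfl⟩
  exact isGood_gen γ hγ

lemma odd_contra (n : ℤ) (hn : (2:ℤ) ∣ n) (a : ℝ) (ha : a = 1 ∨ a = -1)
    (h : a = (n:ℝ)) : False := by
  obtain ⟨z, rfl⟩ := hn
  rcases ha with rfl | rfl
  · have : (1:ℤ) = 2*z := by exact_mod_cast h
    omega
  · have : (-1:ℤ) = 2*z := by exact_mod_cast h
    omega

lemma not_int_half (n z : ℤ) (h : (n:ℝ) = (z:ℝ) - 1/2) : False := by
  have h2 : ((2*n:ℤ):ℝ) = ((2*z - 1 : ℤ):ℝ) := by push_cast; linarith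
  have h3 : 2*n = 2*z - 1 := by exact_mod_cast h2
  omega

lemma introot0 (i j : Fin 8) (hij : i < j) (t : ℝ) (ht : t = 1 ∨ t = -1) :
    (u8 i + t • u8 j) 0 = 0 ∨ (u8 i + t • u8 j) 0 = 1 ∨ (u8 i + t • u8 j) 0 = -1 := by
  have hcoord : (u8 i + t • u8 j) 0
      = (if (0:Fin 8) = i then 1 else 0) + t * (if (0:Fin 8) = j then 1 else 0) := by
    simp [u8_apply]
  by_cases h1 : (0:Fin 8) = i <;> by_cases h2 : (0:Fin 8) = j
  · exact absurd (h1.symm.trans h2) hij.ne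
  · right; left; rw [hcoord, if_pos h1, if_neg h2]; ring
  · rcases ht with rfl | rfl
    · right; left; rw [hcoord, if_neg h1, if_pos h2]; ring
    · right; right; rw [hcoord, if_neg h1, if_pos h2]; ring
  · left; rw [hcoord, if_neg h1, if_neg h2]; ring

lemma diag (γ δ : Fin 8 → ℝ) (hγ : γ ∈ e8pos) (hδ : δ ∈ e8pos)
    (m : Fin 8 → ℤ) (hm : ∀ c, γ c - δ c = (m c : ℝ))
    (hpar : ∀ c, (m c : ZMod 2) = (m 0 : ZMod 2))
    (hsum : ((∑ c, m c : ℤ) : ZMod 4) = 0) : γ = δ := by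
  rcases hγ with ⟨i, j, hij, t, ht, rfl⟩ | ⟨ε, hε, hε0, hεp, rfl⟩
  · rcases hδ with ⟨k, l, hkl, s, hs, rfl⟩ | ⟨ε', hε', hε'0, hε'p, rfl⟩
    · -- int-int
      have hij' : i ≠ j := hij.ne
      have hkl' : k ≠ l := hkl.ne
      have gapp : ∀ c, (u8 i + t • u8 j) c
          = (if c = i then 1 else 0) + t * (if c = j then 1 else 0) := fun c => by
        simp [u8_apply]
      have dapp : ∀ c, (u8 k + s • u8 l) c
          = (if c = k then 1 else 0) + s * (if c = l then 1 else 0) := fun c => by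
        simp [u8_apply]
      have hex : ∃ c : Fin 8, c ≠ i ∧ c ≠ j ∧ c ≠ k ∧ c ≠ l := by
        by_contra hcon
        push_neg at hcon
        have hsub : (Finset.univ : Finset (Fin 8)) ⊆ {i, j, k, l} := by
          intro c _
          simp only [Finset.mem_insert, Finset.mem_singleton]
          by_cases h1 : c = i; · exact Or.inl h1
          by_cases h2 : c = j; · exact Or.inr (Or.inl h2)
          by_cases h3 : c = k; · exact Or.inr (Or.inr (Or.inl h3))
          exact Or.inr (Or.inr (Or.inr (hcon c h1 h2 h3)))
        have h1 : (8:ℕ) ≤ ({i,j,k,l} : Finset (Fin 8)).card := by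
          have := Finset.card_le_card hsub
          simpa using this
        have h2 : ({i,j,k,l} : Finset (Fin 8)).card ≤ 4 := by
          refine le_trans (Finset.card_insert_le _ _) (Nat.succ_le_succ ?_)
          refine le_trans (Finset.card_insert_le _ _) (Nat.succ_le_succ ?_)
          refine le_trans (Finset.card_insert_le _ _) (Nat.succ_le_succ ?_)
          simp
        omega
      obtain ⟨c0, hc0i, hc0j, hc0k, hc0l⟩ := hex
      have hmc0 : m c0 = 0 := by
        have h := hm c0
        rw [gapp c0, dapp c0, if_neg hc0i, if_neg hc0j, if_neg hc0k, if_neg hc0l] at h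
        have : (0:ℝ) = (m c0 : ℝ) := by linarith
        exact_mod_cast this.symm
      have heven : ∀ c, (2:ℤ) ∣ m c := by
        intro c
        refine (ZMod.intCast_zmod_eq_zero_iff_dvd (m c) 2).mp ?_
        rw [hpar c, ← hpar c0, hmc0]
        simp
      have hik : i = k ∨ i = l := by
        by_contra hcon
        push_neg at hcon
        have h := hm i
        rw [gapp i, dapp i, if_pos rfl, if_neg hij', if_neg hcon.1, if_neg hcon.2] at h
        exact odd_contra (m i) (heven i) 1 (Or.inl rfl) (by linarith)
      have hjk : j = k ∨ j = l := by
        by_contra hcon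
        push_neg at hcon
        have h := hm j
        rw [gapp j, dapp j, if_neg (Ne.symm hij'), if_pos rfl, if_neg hcon.1,
          if_neg hcon.2] at h
        exact odd_contra (m j) (heven j) t ht (by linarith)
      have hki : k = i ∨ k = j := by
        by_contra hcon
        push_neg at hcon
        have h := hm k
        rw [gapp k, dapp k, if_neg hcon.1, if_neg hcon.2, if_pos rfl, if_neg hkl'] at h
        exact odd_contra (m k) (heven k) (-1) (Or.inr rfl) (by linarith)
      have hli : l = i ∨ l = j := by
        by_contra hcon
        push_neg at hcon
        have h := hm l
        rw [gapp l, dapp l, if_neg hcon.1, if_neg hcon.2, if_neg (Ne.symm hkl'),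
          if_pos rfl] at h
        have hns : -s = 1 ∨ -s = -1 := by
          rcases hs with rfl | rfl
          · right; norm_num
          · left; norm_num
        exact odd_contra (m l) (heven l) (-s) hns (by linarith)
      have e1 : (i:ℕ) = k ∨ (i:ℕ) = l := hik.imp (congrArg Fin.val) (congrArg Fin.val)
      have e2 : (j:ℕ) = k ∨ (j:ℕ) = l := hjk.imp (congrArg Fin.val) (congrArg Fin.val)
      have e3 : (k:ℕ) = i ∨ (k:ℕ) = j := hki.imp (congrArg Fin.val) (congrArg Fin.val)
      have e4 : (l:ℕ) = i ∨ (l:ℕ) = j := hli.imp (congrArg Fin.val) (congrArg Fin.val)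
      have hijn : (i:ℕ) < j := hij
      have hkln : (k:ℕ) < l := hkl
      have hfin : (i:ℕ) = k ∧ (j:ℕ) = l := by omega
      obtain rfl : i = k := Fin.val_injective hfin.1
      obtain rfl : j = l := Fin.val_injective hfin.2
      rcases ht with rfl | rfl <;> rcases hs with rfl | rfl
      · rfl
      · exfalso
        have hmc : ∀ c, m c = if c = j then 2 else 0 := by
          intro c
          by_cases hc : c = j
          · have hci : c ≠ i := fun h' => hij' (h'.symm.trans hc)
            have h := hm c
            rw [gapp c, dapp c, if_neg hci, if_pos hc] at h
            rw [if_pos hc]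
            have : (2:ℝ) = (m c : ℝ) := by linarith
            exact_mod_cast this.symm
          · rw [if_neg hc]
            by_cases hci : c = i
            · have h := hm c
              rw [gapp c, dapp c, if_pos hci, if_neg hc] at h
              have : (0:ℝ) = (m c : ℝ) := by linarith
              exact_mod_cast this.symm
            · have h := hm c
              rw [gapp c, dapp c, if_neg hci, if_neg hc] at h
              have : (0:ℝ) = (m c : ℝ) := by linarith
              exact_mod_cast this.symm
        rw [Finset.sum_congr rfl (fun c _ => hmc c), Finset.sum_ite_eq'] at hsum
        simp only [Finset.mem_univ, if_pos] at hsum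
        exact absurd hsum (by decide)
      · exfalso
        have hmc : ∀ c, m c = if c = j then -2 else 0 := by
          intro c
          by_cases hc : c = j
          · have hci : c ≠ i := fun h' => hij' (h'.symm.trans hc)
            have h := hm c
            rw [gapp c, dapp c, if_neg hci, if_pos hc] at h
            rw [if_pos hc]
            have : (-2:ℝ) = (m c : ℝ) := by linarith
            exact_mod_cast this.symm
          · rw [if_neg hc]
            by_cases hci : c = i
            · have h := hm c
              rw [gapp c, dapp c, if_pos hci, if_neg hc] at h
              have : (0:ℝ) = (m c : ℝ) := by linarith
              exact_mod_cast this.symm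
            · have h := hm c
              rw [gapp c, dapp c, if_neg hci, if_neg hc] at h
              have : (0:ℝ) = (m c : ℝ) := by linarith
              exact_mod_cast this.symm
        rw [Finset.sum_congr rfl (fun c _ => hmc c), Finset.sum_ite_eq'] at hsum
        simp only [Finset.mem_univ, if_pos] at hsum
        exact absurd hsum (by decide)
      · rfl
    · -- int-half
      exfalso
      have h := hm 0
      have hδ0 : ((1/2 : ℝ) • ε') 0 = 1/2 := by
        simp [Pi.smul_apply, hε'0]
      rw [hδ0] at h
      rcases introot0 i j hij t ht with h0 | h0 | h0 <;> rw [h0] at h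
      · exact not_int_half (m 0) 0 (by push_cast; linarith)
      · exact not_int_half (m 0) 1 (by push_cast; linarith)
      · exact not_int_half (m 0) (-1) (by push_cast; linarith)
  · rcases hδ with ⟨k, l, hkl, s, hs, rfl⟩ | ⟨ε', hε', hε'0, hε'p, rfl⟩
    · -- half-int
      exfalso
      have h := hm 0
      have hγ0 : ((1/2 : ℝ) • ε) 0 = 1/2 := by
        simp [Pi.smul_apply, hε0]
      rw [hγ0] at h
      rcases introot0 k l hkl s hs with h0 | h0 | h0 <;> rw [h0] at h
      · exact not_int_half (m 0) 1 (by push_cast; linarith)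
      · exact not_int_half (m 0) 0 (by push_cast; linarith)
      · exact not_int_half (m 0) 2 (by push_cast; linarith)
    · -- half-half
      have h0 : m 0 = 0 := by
        have h := hm 0
        simp only [Pi.smul_apply, smul_eq_mul, hε0, hε'0] at h
        have : (0:ℝ) = (m 0 : ℝ) := by linarith
        exact_mod_cast this.symm
      have hall : ∀ c, (m c : ZMod 2) = 0 := by
        intro c; rw [hpar c, h0]; simp
      have hee : ε = ε' := by
        funext c
        rcases hε c with h1 | h1 <;> rcases hε' c with h2 | h2 <;> rw [h1, h2]
        · exfalso
          have h := hm c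
          simp only [Pi.smul_apply, smul_eq_mul, h1, h2] at h
          have hmc : m c = 1 := by
            have : (1:ℝ) = (m c : ℝ) := by linarith
            exact_mod_cast this.symm
          have := hall c
          rw [hmc] at this
          exact absurd this (by decide)
        · exfalso
          have h := hm c
          simp only [Pi.smul_apply, smul_eq_mul, h1, h2] at h
          have hmc : m c = -1 := by
            have : (-1:ℝ) = (m c : ℝ) := by linarith
            exact_mod_cast this.symm
          have := hall c
          rw [hmc] at this
          exact absurd this (by decide)
      rw [hee]

lemma ip8_sub (a b : Fin 8) (x : Fin 8 → ℝ) : ip8 (u8 a - u8 b) x = x a - x b := by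
  unfold ip8
  have h : ∀ c, (u8 a - u8 b) c * x c
      = (if c = a then x c else 0) - (if c = b then x c else 0) := by
    intro c; simp only [Pi.sub_apply, u8_apply]; split_ifs <;> ring
  rw [Finset.sum_congr rfl fun c _ => h c, Finset.sum_sub_distrib,
    Finset.sum_ite_eq', Finset.sum_ite_eq']
  simp

lemma a5 : (u8 6 - u8 7 : Fin 8 → ℝ) 5 = 0 := by
  simp [u8_apply, show (5:Fin 8) ≠ 6 by decide, show (5:Fin 8) ≠ 7 by decide]
lemma a6 : (u8 6 - u8 7 : Fin 8 → ℝ) 6 = 1 := by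
  simp [u8_apply, show (6:Fin 8) ≠ 7 by decide]
lemma a7 : (u8 6 - u8 7 : Fin 8 → ℝ) 7 = -1 := by
  simp [u8_apply, show (7:Fin 8) ≠ 6 by decide]
lemma b5 : (u8 5 - u8 6 : Fin 8 → ℝ) 5 = 1 := by
  simp [u8_apply, show (5:Fin 8) ≠ 6 by decide]
lemma b6 : (u8 5 - u8 6 : Fin 8 → ℝ) 6 = -1 := by
  simp [u8_apply, show (6:Fin 8) ≠ 5 by decide]
lemma b7 : (u8 5 - u8 6 : Fin 8 → ℝ) 7 = 0 := by
  simp [u8_apply, show (7:Fin 8) ≠ 5 by decide, show (7:Fin 8) ≠ 6 by decide]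

lemma offdiag (m : Fin 8 → ℤ) (hpar : ∀ c, (m c : ZMod 2) = (m 0 : ZMod 2))
    (c d : Fin 8) (k : ℤ) (hk : (k : ZMod 2) = 1)
    (h : (m c : ℝ) - (m d : ℝ) = (k:ℝ)) : False := by
  have h1 : m c - m d = k := by exact_mod_cast h
  have h2 : ((m c - m d : ℤ) : ZMod 2) = 0 := by
    push_cast
    rw [hpar c, hpar d]; ring
  rw [h1, hk] at h2
  exact one_ne_zero h2

theorem lambda_key :
    ∀ μ ∈ ((fun γ => (u8 6 - u8 7) + γ) ''
        {γ | γ ∈ e8pos ∧ ip8 (u8 6 - u8 7) γ = 0} ∪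
      (fun δ => (u8 5 - u8 6) + δ) ''
        {δ | δ ∈ e8pos ∧ ip8 (u8 6 - u8 7) δ = 0 ∧ ip8 (u8 5 - u8 6) δ = 0} ∪
      (fun δ => (u8 6 - u8 7) + (u8 5 - u8 6) + δ) ''
        {δ | δ ∈ e8pos ∧ ip8 (u8 6 - u8 7) δ = 0 ∧ ip8 (u8 5 - u8 6) δ = 0}),
    ∀ ν ∈ ((fun γ => (u8 6 - u8 7) + γ) ''
        {γ | γ ∈ e8pos ∧ ip8 (u8 6 - u8 7) γ = 0} ∪
      (fun δ => (u8 5 - u8 6) + δ) ''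
        {δ | δ ∈ e8pos ∧ ip8 (u8 6 - u8 7) δ = 0 ∧ ip8 (u8 5 - u8 6) δ = 0} ∪
      (fun δ => (u8 6 - u8 7) + (u8 5 - u8 6) + δ) ''
        {δ | δ ∈ e8pos ∧ ip8 (u8 6 - u8 7) δ = 0 ∧ ip8 (u8 5 - u8 6) δ = 0}),
    μ ≠ ν → μ - ν ∉ e8Gamma := by
  intro μ hμ ν hν hne hΓ
  obtain ⟨m, hco, hpar, hsum⟩ := good_of_mem hΓ
  have hm : ∀ c, μ c - ν c = (m c : ℝ) := fun c => by
    have := hco c; rwa [Pi.sub_apply] at this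
  simp only [Set.mem_union, Set.mem_image, Set.mem_setOf_eq] at hμ hν
  rcases hμ with (⟨γ, ⟨hγpos, hγa⟩, rfl⟩ | ⟨γ, ⟨hγpos, hγa, hγb⟩, rfl⟩) |
    ⟨γ, ⟨hγpos, hγa, hγb⟩, rfl⟩ <;>
  rcases hν with (⟨δ, ⟨hδpos, hδa⟩, rfl⟩ | ⟨δ, ⟨hδpos, hδa, hδb⟩, rfl⟩) |
    ⟨δ, ⟨hδpos, hδa, hδb⟩, rfl⟩ <;>
  rw [ip8_sub] at hγa hδa <;>
  [skip; rw [ip8_sub] at hδb; rw [ip8_sub] at hδb;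
   rw [ip8_sub] at hγb; rw [ip8_sub] at hγb hδb; rw [ip8_sub] at hγb hδb;
   rw [ip8_sub] at hγb; rw [ip8_sub] at hγb hδb; rw [ip8_sub] at hγb hδb]
  -- (A,A)
  · have hg : ∀ c, γ c - δ c = (m c : ℝ) := fun c => by
      have h := hm c; simp only [Pi.add_apply] at h; linarith
    exact hne (congrArg _ (diag γ δ hγpos hδpos m hg hpar hsum))
  -- (A,B) : m6 - m7 = 3
  · have h6 := hm 6; have h7 := hm 7
    simp only [Pi.add_apply, a6, a7, b6, b7] at h6 h7
    exact offdiag m hpar 6 7 3 (by decide) (by push_cast; linarith)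
  -- (A,C) : m6 - m7 = 1
  · have h6 := hm 6; have h7 := hm 7
    simp only [Pi.add_apply, a6, a7, b6, b7] at h6 h7
    exact offdiag m hpar 6 7 1 (by decide) (by push_cast; linarith)
  -- (B,A) : m6 - m7 = -3
  · have h6 := hm 6; have h7 := hm 7
    simp only [Pi.add_apply, a6, a7, b6, b7] at h6 h7
    exact offdiag m hpar 6 7 (-3) (by decide) (by push_cast; linarith)
  -- (B,B)
  · have hg : ∀ c, γ c - δ c = (m c : ℝ) := fun c => by
      have h := hm c; simp only [Pi.add_apply] at h; linarith
    exact hne (congrArg _ (diag γ δ hγpos hδpos m hg hpar hsum))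
  -- (B,C) : m5 - m6 = 1
  · have h5 := hm 5; have h6 := hm 6
    simp only [Pi.add_apply, a5, a6, b5, b6] at h5 h6
    exact offdiag m hpar 5 6 1 (by decide) (by push_cast; linarith)
  -- (C,A) : m6 - m7 = -1
  · have h6 := hm 6; have h7 := hm 7
    simp only [Pi.add_apply, a6, a7, b6, b7] at h6 h7
    exact offdiag m hpar 6 7 (-1) (by decide) (by push_cast; linarith)
  -- (C,B) : m5 - m6 = -1
  · have h5 := hm 5; have h6 := hm 6
    simp only [Pi.add_apply, a5, a6, b5, b6] at h5 h6
    exact offdiag m hpar 5 6 (-1) (by decide) (by push_cast; linarith)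
  -- (C,C)
  · have hg : ∀ c, γ c - δ c = (m c : ℝ) := fun c => by
      have h := hm c; simp only [Pi.add_apply] at h; linarith
    exact hne (congrArg _ (diag γ δ hγpos hδpos m hg hpar hsum))

/-- Lemma 2.3: distinct elements of `Λ_{α,β}` are incongruent modulo `Γ`. -/
theorem stmt9 :
    let α : Fin 8 → ℝ := u8 6 - u8 7
    let β : Fin 8 → ℝ := u8 5 - u8 6
    let S : Set (Fin 8 → ℝ) := {δ | δ ∈ e8pos ∧ ip8 α δ = 0 ∧ ip8 β δ = 0}
    let Λ : Set (Fin 8 → ℝ) :=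
      (fun γ => α + γ) '' {γ | γ ∈ e8pos ∧ ip8 α γ = 0} ∪
      (fun δ => β + δ) '' S ∪ (fun δ => α + β + δ) '' S
    ∀ μ ∈ Λ, ∀ ν ∈ Λ, μ ≠ ν → μ - ν ∉ e8Gamma := by
  intro α β S Λ
  exact lambda_key
end

section
/- Let Cl(ℝ¹⁶) be the Clifford algebra of ℝ¹⁶ with quadratic form v ↦ −‖v‖², with standard orthonormal basis e₀,…,e₁₅, and set x = e₀e₂e₄e₆e₈e₁₀e₁₂e₁₄. Then x² = 1, and for every i with 0 ≤ i ≤ 7, conjugation by x negates the torus generator: x (e_{2i} e_{2i+1}) x⁻¹ = −(e_{2i} e_{2i+1}). -/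
noncomputable def negQ (n : ℕ) : QuadraticForm ℝ (Fin n → ℝ) :=
  QuadraticMap.weightedSumSquares ℝ (fun _ : Fin n => (-1 : ℝ))

lemma negQ_single (i : Fin 16) : negQ 16 (Pi.single i 1) = -1 := by
  simp [negQ, QuadraticMap.weightedSumSquares_apply, Pi.single_apply,
    Finset.sum_ite_eq' (Finset.univ : Finset (Fin 16))]

lemma negQ_polar (i j : Fin 16) (h : i ≠ j) :
    QuadraticMap.polar (negQ 16) (Pi.single i 1) (Pi.single j 1) = 0 := by
  simp [QuadraticMap.polar, negQ, QuadraticMap.weightedSumSquares_apply, Pi.single_apply,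
    add_mul, mul_add, Finset.sum_add_distrib,
    Finset.sum_ite_eq' (Finset.univ : Finset (Fin 16)), h, h.symm]

noncomputable abbrev E (i : Fin 16) : CliffordAlgebra (negQ 16) :=
  CliffordAlgebra.ι (negQ 16) (Pi.single i 1)

lemma E_sq (i : Fin 16) : E i * E i = -1 := by
  rw [CliffordAlgebra.ι_sq_scalar, negQ_single, map_neg, map_one]

lemma E_sq' (i : Fin 16) (y : CliffordAlgebra (negQ 16)) : E i * (E i * y) = -y := by
  rw [← mul_assoc, E_sq, neg_one_mul]

lemma E_swap {i j : Fin 16} (h : (j : ℕ) < (i : ℕ)) : E i * E j = -(E j * E i) := by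
  have hne : j ≠ i := fun hh => by simp [hh] at h
  have := CliffordAlgebra.ι_mul_ι_add_swap (Q := negQ 16) (Pi.single j 1) (Pi.single i 1)
  rw [negQ_polar j i hne, map_zero] at this
  linear_combination (norm := noncomm_ring) this

lemma E_swap' {i j : Fin 16} (h : (j : ℕ) < (i : ℕ)) (y : CliffordAlgebra (negQ 16)) :
    E i * (E j * y) = -(E j * (E i * y)) := by
  rw [← mul_assoc, E_swap h, ← mul_assoc]
  noncomm_ring

/-- The element `x = e₀e₂e₄⋯e₁₄` of `Cl(ℝ¹⁶)` is an involution and conjugation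
by it (`x = x⁻¹`) negates each torus generator `e_{2i} e_{2i+1}`. -/
theorem stmt13 :
    let e : Fin 16 → (Fin 16 → ℝ) := fun i => Pi.single i 1
    let x : CliffordAlgebra (negQ 16) :=
      (List.ofFn fun i : Fin 8 =>
        CliffordAlgebra.ι (negQ 16) (e ⟨2 * i.1, by have := i.isLt; omega⟩)).prod
    x * x = 1 ∧
    ∀ i : Fin 8,
      x * (CliffordAlgebra.ι (negQ 16) (e ⟨2 * i.1, by have := i.isLt; omega⟩) *
            CliffordAlgebra.ι (negQ 16) (e ⟨2 * i.1 + 1, by have := i.isLt; omega⟩)) * x =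
        -(CliffordAlgebra.ι (negQ 16) (e ⟨2 * i.1, by have := i.isLt; omega⟩) *
            CliffordAlgebra.ι (negQ 16) (e ⟨2 * i.1 + 1, by have := i.isLt; omega⟩)) := by
  intro e x
  have hx : x = E ⟨0, by norm_num⟩ * (E ⟨2, by norm_num⟩ * (E ⟨4, by norm_num⟩ * (E ⟨6, by norm_num⟩ * (E ⟨8, by norm_num⟩ * (E ⟨10, by norm_num⟩ * (E ⟨12, by norm_num⟩ * (E ⟨14, by norm_num⟩))))))) := by
    show (List.ofFn _).prod = _
    simp only [List.ofFn_succ, List.prod_cons, List.ofFn_zero, List.prod_nil, mul_one]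
    rfl
  constructor
  · rw [hx]
    simp (config := { decide := true }) only [mul_assoc, mul_neg, neg_mul, neg_neg, mul_one,
      E_swap', E_sq', E_sq]
  · intro i
    fin_cases i <;>
    · rw [hx]
      simp only [e]
      simp (config := { decide := true }) only [mul_assoc, mul_neg, neg_mul, neg_neg, mul_one,
        one_mul, E_swap', E_sq', E_sq, E_swap]
end

section
/- Let 𝕆 be the octonion algebra over ℝ with its standard inner product and norm. If g : 𝕆 → 𝕆 is a linear isometry (g ∈ O(8)) such that u · g(v) = g(u v) for all u, v ∈ 𝕆, then g = id or g = −id. -/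
set_option maxHeartbeats 1000000


/-- The octonions, realized via the Cayley–Dickson construction on the
quaternions: `𝕆 = ℍ × ℍ` with `(a,b)(c,d) = (ac − d̄b, da + bc̄)`. -/
noncomputable def omul (x y : Quaternion ℝ × Quaternion ℝ) : Quaternion ℝ × Quaternion ℝ :=
  (x.1 * y.1 - star y.2 * x.2, y.2 * x.1 + x.2 * star y.1)

/-- The standard (Euclidean) squared norm on `𝕆 = ℍ × ℍ`. -/
def onormSq (x : Quaternion ℝ × Quaternion ℝ) : ℝ :=
  Quaternion.normSq x.1 + Quaternion.normSq x.2

/-- A linear isometry `g` of the octonions satisfying `u · g(v) = g(uv)` for all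
`u, v` is `± id`. -/
theorem stmt16
    (g : (Quaternion ℝ × Quaternion ℝ) →ₗ[ℝ] (Quaternion ℝ × Quaternion ℝ))
    (hiso : ∀ z, onormSq (g z) = onormSq z)
    (hmul : ∀ u v, omul u (g v) = g (omul u v)) :
    g = LinearMap.id ∨ g = -LinearMap.id := by
  set a : Quaternion ℝ × Quaternion ℝ := g ((1 : Quaternion ℝ), (0 : Quaternion ℝ)) with ha_def
  have hone : ∀ u : Quaternion ℝ × Quaternion ℝ,
      omul u ((1 : Quaternion ℝ), (0 : Quaternion ℝ)) = u := by
    intro u; simp [omul]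
  have ha : ∀ u, g u = omul u a := by
    intro u
    have h := hmul u ((1 : Quaternion ℝ), (0 : Quaternion ℝ))
    rw [hone] at h
    exact h.symm
  have key : ∀ u v, omul u (omul v a) = omul (omul u v) a := by
    intro u v
    have h := hmul u v
    rw [ha v, ha (omul u v)] at h
    exact h
  -- basis elements
  set e1 : Quaternion ℝ × Quaternion ℝ := (@id (Quaternion ℝ) ⟨0,1,0,0⟩, 0) with he1
  set e2 : Quaternion ℝ × Quaternion ℝ := (@id (Quaternion ℝ) ⟨0,0,1,0⟩, 0) with he2
  set e4 : Quaternion ℝ × Quaternion ℝ := (0, (1 : Quaternion ℝ)) with he4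
  have k12 := key e1 e2
  have k14 := key e1 e4
  have k24 := key e2 e4
  simp only [he1, he2, he4, omul, Prod.ext_iff, Quaternion.ext_iff,
    Quaternion.re_mul, Quaternion.imI_mul, Quaternion.imJ_mul, Quaternion.imK_mul,
    Quaternion.re_sub, Quaternion.imI_sub, Quaternion.imJ_sub, Quaternion.imK_sub,
    Quaternion.re_add, Quaternion.imI_add, Quaternion.imJ_add, Quaternion.imK_add,
    Quaternion.re_star, Quaternion.imI_star, Quaternion.imJ_star, Quaternion.imK_star,
    Quaternion.re_one, Quaternion.imI_one, Quaternion.imJ_one, Quaternion.imK_one,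
    Quaternion.re_zero, Quaternion.imI_zero, Quaternion.imJ_zero, Quaternion.imK_zero,
    one_mul, mul_one, zero_mul, mul_zero, star_zero, star_one, add_zero, zero_add, sub_zero, zero_sub]
    at k12 k14 k24
  simp only [id] at k12 k14 k24
  ring_nf at k12 k14 k24
  obtain ⟨⟨A1, A2, A3, A4⟩, B1, B2, B3, B4⟩ := k12
  obtain ⟨⟨C1, C2, C3, C4⟩, D1, D2, D3, D4⟩ := k14
  obtain ⟨⟨E1, E2, E3, E4⟩, F1, F2, F3, F4⟩ := k24
  have hq1 : a.2.re = 0 := by linarith only [B4]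
  have hq2 : a.2.imI = 0 := by linarith only [B3]
  have hq3 : a.2.imJ = 0 := by linarith only [B2]
  have hq4 : a.2.imK = 0 := by linarith only [B1]
  have hp2 : a.1.imI = 0 := by linarith only [F4]
  have hp3 : a.1.imJ = 0 := by linarith only [D4]
  have hp4 : a.1.imK = 0 := by linarith only [D3]
  clear A1 A2 A3 A4 B1 B2 B3 B4 C1 C2 C3 C4 D1 D2 D3 D4 E1 E2 E3 E4 F1 F2 F3 F4 key hmul
  have hn := hiso ((1 : Quaternion ℝ), (0 : Quaternion ℝ))
  rw [← ha_def] at hn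
  simp only [onormSq, Quaternion.normSq_def'] at hn
  rw [hq1, hq2, hq3, hq4, hp2, hp3, hp4] at hn
  simp only [Quaternion.re_one, Quaternion.imI_one, Quaternion.imJ_one, Quaternion.imK_one,
    Quaternion.re_zero, Quaternion.imI_zero, Quaternion.imJ_zero, Quaternion.imK_zero] at hn
  have hre : a.1.re = 1 ∨ a.1.re = -1 := by
    have : a.1.re ^ 2 = 1 := by nlinarith
    have h2 : (a.1.re - 1) * (a.1.re + 1) = 0 := by nlinarith
    rcases mul_eq_zero.mp h2 with h | h
    · left; linarith
    · right; linarith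
  have haval : a = ((1 : Quaternion ℝ), 0) ∨ a = ((-1 : Quaternion ℝ), 0) := by
    rcases hre with h | h
    · left
      refine Prod.ext ?_ ?_
      · ext <;> simp [h, hp2, hp3, hp4] <;> rfl
      · ext <;> simp [hq1, hq2, hq3, hq4] <;> rfl
    · right
      refine Prod.ext ?_ ?_
      · ext <;> simp [h, hp2, hp3, hp4] <;> rfl
      · ext <;> simp [hq1, hq2, hq3, hq4] <;> rfl
  rcases haval with h | h
  · left
    refine LinearMap.ext fun u => ?_
    rw [LinearMap.id_apply, ha u, h, hone]
  · right
    refine LinearMap.ext fun u => ?_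
    rw [LinearMap.neg_apply, LinearMap.id_apply, ha u, h]
    refine Prod.ext ?_ ?_ <;> simp [omul]
end

section
/- Let 𝕆 be the octonion algebra over ℝ. If a ∈ 𝕆 satisfies u (v a) = (u v) a for all u, v ∈ 𝕆, then a ∈ ℝ·1, i.e., a is a real scalar multiple of the identity. -/
/-- If `a ∈ 𝕆` satisfies `u(va) = (uv)a` for all `u, v ∈ 𝕆`, then `a` is a real
scalar multiple of the identity `1 = (1, 0)`. -/
theorem stmt17 (a : Quaternion ℝ × Quaternion ℝ)
    (h : ∀ u v, omul u (omul v a) = omul (omul u v) a) :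
    ∃ r : ℝ, a = (algebraMap ℝ (Quaternion ℝ) r, 0) := by
  set i : Quaternion ℝ := ⟨0,1,0,0⟩ with hi
  set j : Quaternion ℝ := ⟨0,0,1,0⟩ with hj
  -- second component of h (u1,0) (v1,0): a.2 * v1 * u1 = a.2 * (u1 * v1)
  have key : ∀ u1 v1 : Quaternion ℝ, a.2 * v1 * u1 = a.2 * (u1 * v1) := by
    intro u1 v1
    have := congrArg Prod.snd (h (u1, 0) (v1, 0))
    simp [omul] at this
    exact this
  have hq : a.2 = 0 := by
    have h1 := key j i
    have h2 : a.2 * (i * j - j * i) = 0 := by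
      rw [mul_sub, ← mul_assoc, key j i, sub_self]
    rcases mul_eq_zero.mp h2 with h3 | h3
    · exact h3
    · exfalso
      have : (i * j - j * i).imK = 0 := by rw [h3]; rfl
      simp only [Quaternion.imK_sub, Quaternion.imK_mul] at this; simp [hi, hj] at this
  -- now from h (0,1) (v1,0): star (v1 * a.1) = star v1 * star a.1, i.e. p commutes
  have comm : ∀ v1 : Quaternion ℝ, v1 * a.1 = a.1 * v1 := by
    intro v1
    have := congrArg Prod.snd (h (0, 1) (v1, 0))
    simp [omul, hq] at this
    simpa using congrArg star this
  have c1 := comm i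
  have c2 := comm j
  refine ⟨a.1.re, ?_⟩
  have h1 : a.1 = (algebraMap ℝ (Quaternion ℝ)) a.1.re := by
    ext
    · simp [Quaternion.algebraMap_def]
    · have := congrArg QuaternionAlgebra.imK c2
      simp only [Quaternion.imK_mul] at this; simp [hj] at this
      simp [Quaternion.algebraMap_def]; linarith
    · have := congrArg QuaternionAlgebra.imK c1
      simp only [Quaternion.imK_mul] at this; simp [hi] at this
      simp [Quaternion.algebraMap_def]; linarith
    · have := congrArg QuaternionAlgebra.imJ c1
      simp only [Quaternion.imJ_mul] at this; simp [hi] at this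
      simp [Quaternion.algebraMap_def]; linarith
  exact Prod.ext h1 hq
end
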